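/- Let n ≥ 1 and let d = (d_0,…,d_n) and e = (e_0,…,e_n) be strictly increasing tuples of integers. Fix an index i with 0 ≤ i < n such that d_i = e_i and d_{i+1} = e_{i+1}. If d_k ≤ e_k for every k and d ≠ e, then (∏_{k≠i+1} |d_{i+1} − d_k|)·(∏_{k≠i} |e_i − e_k|) < (∏_{k≠i+1} |e_{i+1} − e_k|)·(∏_{k≠i} |d_i − d_k|); equivalently, β_i(π_d)/β_{i+1}(π_d) < β_i(π_e)/β_{i+1}(π_e) as positive rationals. -/

import Mathlib

/-!
Write `a = d_i = e_i` and `b = d_{i+1} = e_{i+1}`. After cancelling the common factor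
`|b - a| * |a - b|`, both sides are products over the indices `k ∉ {i, i+1}`, and the claim
becomes `∏ |b - d_k| |a - e_k| < ∏ |b - e_k| |a - d_k|`. Since `i` and `i+1` are adjacent, both
`d_k` and `e_k` lie on the same side of `[a, b]`, where the factors differ by exactly
`(b - a) (e_k - d_k) ≥ 0`; this is strictly positive for some `k` because `d ≠ e`.
-/

open Finset

section Pointwise

variable {R : Type*} [CommRing R] [LinearOrder R] [IsStrictOrderedRing R] {a b x y : R}

lemma abs_sub_mul_abs_sub_add_eq (hab : a < b) (h : (x < a ∧ y < a) ∨ (b < x ∧ b < y)) :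
    |b - x| * |a - y| + (b - a) * (y - x) = |b - y| * |a - x| := by
  rcases h with ⟨hx, hy⟩ | ⟨hx, hy⟩
  · rw [abs_of_pos (by linarith : 0 < b - x), abs_of_pos (by linarith : 0 < a - y),
      abs_of_pos (by linarith : 0 < b - y), abs_of_pos (by linarith : 0 < a - x)]
    ring
  · rw [abs_of_neg (by linarith : b - x < 0), abs_of_neg (by linarith : a - y < 0),
      abs_of_neg (by linarith : b - y < 0), abs_of_neg (by linarith : a - x < 0)]
    ring

lemma abs_sub_mul_abs_sub_pos (hab : a < b) (h : (x < a ∧ y < a) ∨ (b < x ∧ b < y)) :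
    0 < |b - x| * |a - y| := by
  rcases h with ⟨hx, hy⟩ | ⟨hx, hy⟩
  · exact mul_pos (abs_pos_of_pos (by linarith)) (abs_pos_of_pos (by linarith))
  · exact mul_pos (abs_pos_of_neg (by linarith)) (abs_pos_of_neg (by linarith))

lemma abs_sub_mul_abs_sub_le (hab : a < b) (hxy : x ≤ y)
    (h : (x < a ∧ y < a) ∨ (b < x ∧ b < y)) : |b - x| * |a - y| ≤ |b - y| * |a - x| := by
  rw [← abs_sub_mul_abs_sub_add_eq hab h]
  exact le_add_of_nonneg_right (mul_nonneg (sub_nonneg.2 hab.le) (sub_nonneg.2 hxy))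

lemma abs_sub_mul_abs_sub_lt (hab : a < b) (hxy : x < y)
    (h : (x < a ∧ y < a) ∨ (b < x ∧ b < y)) : |b - x| * |a - y| < |b - y| * |a - x| := by
  rw [← abs_sub_mul_abs_sub_add_eq hab h]
  exact lt_add_of_pos_right _ (mul_pos (sub_pos.2 hab) (sub_pos.2 hxy))

end Pointwise

lemma prod_filter_ne_eq_mul_prod_compl_pair {ι M : Type*} [Fintype ι] [DecidableEq ι]
    [CommMonoid M] {I J : ι} (hIJ : I ≠ J) (f : ι → M) :
    ∏ k ∈ univ.filter (· ≠ J), f k = f I * ∏ k ∈ {I, J}ᶜ, f k := by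
  have : univ.filter (· ≠ J) = insert I ({I, J}ᶜ : Finset ι) := by
    ext k
    simp only [mem_filter, mem_univ, true_and, mem_insert, mem_compl, mem_singleton, not_or]
    by_cases hkI : k = I <;> simp_all
  rw [this, prod_insert (by simp)]

lemma CovBy.lt_or_lt_of_ne {ι : Type*} [LinearOrder ι] {I J k : ι} (h : I ⋖ J) (hI : k ≠ I)
    (hJ : k ≠ J) : k < I ∨ J < k :=
  (lt_or_gt_of_ne hI).imp_right fun hIk => (h.ge_of_gt hIk).lt_of_ne' hJ

theorem monotonicity_principle {ι R : Type*} [Fintype ι] [LinearOrder ι] [CommRing R]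
    [LinearOrder R] [IsStrictOrderedRing R] {d e : ι → R} (hd : StrictMono d)
    (he : StrictMono e) {I J : ι} (hIJ : I ⋖ J) (hI : d I = e I) (hJ : d J = e J)
    (hle : d ≤ e) (hne : d ≠ e) :
    (∏ k ∈ univ.filter (· ≠ J), |d J - d k|) *
        ∏ k ∈ univ.filter (· ≠ I), |e I - e k| <
      (∏ k ∈ univ.filter (· ≠ J), |e J - e k|) *
        ∏ k ∈ univ.filter (· ≠ I), |d I - d k| := by
  simp only [prod_filter_ne_eq_mul_prod_compl_pair hIJ.ne,
    prod_filter_ne_eq_mul_prod_compl_pair hIJ.ne.symm, pair_comm J I, ← hI, ← hJ]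
  have hab : d I < d J := hd hIJ.lt
  have hside : ∀ k ∈ ({I, J}ᶜ : Finset ι),
      (d k < d I ∧ e k < d I) ∨ (d J < d k ∧ d J < e k) := by
    intro k hk
    simp only [mem_compl, mem_insert, mem_singleton, not_or] at hk
    rcases hIJ.lt_or_lt_of_ne hk.1 hk.2 with hkI | hJk
    · exact Or.inl ⟨hd hkI, hI ▸ he hkI⟩
    · exact Or.inr ⟨hd hJk, hJ ▸ he hJk⟩
  obtain ⟨k₀, hdk₀⟩ := Function.ne_iff.1 hne
  have hk₀ : k₀ ∈ ({I, J}ᶜ : Finset ι) := by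
    simp only [mem_compl, mem_insert, mem_singleton, not_or]
    exact ⟨fun h => hdk₀ (h ▸ hI), fun h => hdk₀ (h ▸ hJ)⟩
  have key : ∏ k ∈ ({I, J}ᶜ : Finset ι), |d J - d k| * |d I - e k| <
      ∏ k ∈ ({I, J}ᶜ : Finset ι), |d J - e k| * |d I - d k| :=
    prod_lt_prod (fun k hk => abs_sub_mul_abs_sub_pos hab (hside k hk))
      (fun k hk => abs_sub_mul_abs_sub_le hab (hle k) (hside k hk))
      ⟨k₀, hk₀, abs_sub_mul_abs_sub_lt hab ((hle k₀).lt_of_ne hdk₀) (hside k₀ hk₀)⟩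
  rw [prod_mul_distrib, prod_mul_distrib] at key
  have hc : 0 < |d J - d I| * |d I - d J| :=
    mul_pos (abs_pos_of_pos (sub_pos.2 hab)) (abs_pos_of_neg (sub_neg.2 hab))
  linarith [mul_lt_mul_of_pos_left key hc]

/-- **Monotonicity Principle** for finite (integer) degree sequences, in cross-multiplied
form.  If `d, e : Fin (n+1) → ℤ` are strictly increasing tuples agreeing in positions `i`
and `i + 1`, with `d_k ≤ e_k` for all `k` and `d ≠ e`, then
`(∏_{k≠i+1} |d_{i+1} − d_k|)·(∏_{k≠i} |e_i − e_k|) <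
 (∏_{k≠i+1} |e_{i+1} − e_k|)·(∏_{k≠i} |d_i − d_k|)`,
which is equivalent to `β_i(π_d)/β_{i+1}(π_d) < β_i(π_e)/β_{i+1}(π_e)`. -/
theorem monotonicity_principle_int {n : ℕ}
    (d e : Fin (n + 1) → ℤ)
    (hd : ∀ k : ℕ, (hk : k + 1 ≤ n) → d ⟨k, by omega⟩ + 1 ≤ d ⟨k + 1, by omega⟩)
    (he : ∀ k : ℕ, (hk : k + 1 ≤ n) → e ⟨k, by omega⟩ + 1 ≤ e ⟨k + 1, by omega⟩)
    (i : ℕ) (hi : i < n)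
    (hdei : d ⟨i, by omega⟩ = e ⟨i, by omega⟩)
    (hdei1 : d ⟨i + 1, by omega⟩ = e ⟨i + 1, by omega⟩)
    (hle : ∀ k, d k ≤ e k) (hne : d ≠ e) :
    (∏ k ∈ Finset.univ.filter (fun k => k ≠ (⟨i + 1, by omega⟩ : Fin (n + 1))),
        |d ⟨i + 1, by omega⟩ - d k|) *
      (∏ k ∈ Finset.univ.filter (fun k => k ≠ (⟨i, by omega⟩ : Fin (n + 1))),
        |e ⟨i, by omega⟩ - e k|) <
    (∏ k ∈ Finset.univ.filter (fun k => k ≠ (⟨i + 1, by omega⟩ : Fin (n + 1))),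
        |e ⟨i + 1, by omega⟩ - e k|) *
      (∏ k ∈ Finset.univ.filter (fun k => k ≠ (⟨i, by omega⟩ : Fin (n + 1))),
        |d ⟨i, by omega⟩ - d k|) := by
  have hd_mono : StrictMono d :=
    Fin.strictMono_iff_lt_succ.2 fun k => Int.add_one_le_iff.1 (hd k k.2)
  have he_mono : StrictMono e :=
    Fin.strictMono_iff_lt_succ.2 fun k => Int.add_one_le_iff.1 (he k k.2)
  exact monotonicity_principle hd_mono he_mono (Fin.covBy_iff.2 (Nat.covBy_iff_add_one_eq.2 rfl))
    hdei hdei1 hle hne
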